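/- Let M be a compact smooth manifold and let E and F be smooth complex vector bundles of finite rank over M. Then the natural map sending a smooth global section Φ of the homomorphism bundle Hom(E,F) to the C^∞(M,ℂ)-linear map Γ^∞(E) → Γ^∞(F), s ↦ (x ↦ Φ(x)(s(x))), is a bijection from Γ^∞(Hom(E,F)) onto the set of all C^∞(M,ℂ)-module homomorphisms Γ^∞(E) → Γ^∞(F). -/

import Mathlib

/-!
A `C^∞(M, ℂ)`-linear map `T : Γ^∞(E) → Γ^∞(F)` acts pointwise. Suppose `s x = 0` and let `χ` be
a bump function supported in a trivialization of `E` around `x`, with `χ = 1` near `x`. Cutting a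
local frame `eᵢ` and the coordinates `sⁱ` of `s` off by `χ` gives global sections `tᵢ = χ • eᵢ`
and smooth functions `cᵢ = χ • sⁱ` vanishing at `x` with `χ² • s = ∑ᵢ cᵢ • tᵢ`, hence
`(T s) x = χ(x)² (T s) x = ∑ᵢ cᵢ(x) (T tᵢ) x = 0`. So `(T s) x = Φ x (s x)` for a unique linear
`Φ x`, and `Φ` is smooth because in a trivialization its values on a basis of the fibre are the
coordinates of the smooth sections `T tᵢ`. Conversely, a smooth `Φ` applied pointwise to a smooth
section is, in coordinates, a smooth family of linear maps applied to a smooth vector.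
-/

open Bundle Manifold
open scoped TensorProduct

local notation "∞" => (⊤ : ℕ∞)

noncomputable section

/-- Complex multiplication and addition are smooth over `ℝ`, so that the complex-valued smooth
functions on a real manifold form a (comm)ring. -/
instance : ContMDiffRing 𝓘(ℝ, ℂ) ∞ ℂ where
  contMDiff_add := by
    rw [contMDiff_iff]
    refine ⟨continuous_add, fun x y => ?_⟩
    simp only [mfld_simps, chartAt_self_eq]
    rw [contDiffOn_univ]
    exact contDiff_add
  contMDiff_mul := by
    rw [contMDiff_iff]
    refine ⟨continuous_mul, fun x y => ?_⟩
    simp only [mfld_simps, chartAt_self_eq]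
    rw [contDiffOn_univ]
    exact contDiff_mul

variable {EM : Type*} [NormedAddCommGroup EM] [NormedSpace ℝ EM] [FiniteDimensional ℝ EM]
  {HM : Type*} [TopologicalSpace HM] {IM : ModelWithCorners ℝ EM HM}
  {M : Type*} [TopologicalSpace M] [ChartedSpace HM M] [IsManifold IM ∞ M]
  [T2Space M] [SecondCountableTopology M] [CompactSpace M]

/-- The constant functions make the smooth complex-valued functions a `ℂ`-algebra. -/
instance : Algebra ℂ C^∞⟮IM, M; 𝓘(ℝ, ℂ), ℂ⟯ :=
  RingHom.toAlgebra
    { toFun := fun c => ⟨fun _ => c, contMDiff_const⟩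
      map_one' := rfl
      map_mul' := fun _ _ => rfl
      map_zero' := rfl
      map_add' := fun _ _ => rfl }

variable {F : Type*} [NormedAddCommGroup F] [NormedSpace ℂ F] [FiniteDimensional ℂ F]
  {V : M → Type*} [TopologicalSpace (TotalSpace F V)]
  [∀ x, AddCommGroup (V x)] [∀ x, Module ℂ (V x)] [∀ x, TopologicalSpace (V x)]
  [FiberBundle F V] [VectorBundle ℂ F V] [VectorBundle ℝ F V] [ContMDiffVectorBundle ∞ F V IM]

/-- Pointwise scalar multiplication of a smooth section by a smooth function. -/
instance ContMDiffSection.instSMulSmoothMap :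
    SMul C^∞⟮IM, M; 𝓘(ℝ, ℂ), ℂ⟯ Cₛ^∞⟮IM; F, V⟯ := by
  refine ⟨fun f s => ⟨fun x => f x • s x, ?_⟩⟩
  intro x₀
  have hs := s.contMDiff x₀
  have hf : ContMDiffAt IM 𝓘(ℝ, ℂ) ∞ f x₀ := f.contMDiff x₀
  rw [contMDiffAt_section] at hs ⊢
  set e := trivializationAt F V x₀
  have h1 : ContMDiffAt IM 𝓘(ℝ, F →L[ℝ] F) ∞
      (fun x => (ContinuousLinearMap.lsmul ℝ ℂ (f x) : F →L[ℝ] F)) x₀ :=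
    ContDiff.comp_contMDiffAt
      (g := ⇑(ContinuousLinearMap.lsmul ℝ ℂ : ℂ →L[ℝ] F →L[ℝ] F))
      (ContinuousLinearMap.contDiff _) hf
  refine (h1.clm_apply hs).congr_of_eventuallyEq ?_
  refine Filter.eventually_of_mem
    (e.open_baseSet.mem_nhds <| mem_baseSet_trivializationAt F V x₀) ?_
  intro x hx
  simp only [ContinuousLinearMap.lsmul_apply]
  exact (e.linear ℂ hx).2 (f x) (s x)

set_option linter.unusedSectionVars false in
@[simp]
theorem ContMDiffSection.coe_smul_smoothMap (f : C^∞⟮IM, M; 𝓘(ℝ, ℂ), ℂ⟯)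
    (s : Cₛ^∞⟮IM; F, V⟯) (x : M) : (f • s) x = f x • s x :=
  rfl

/-- The smooth sections of a smooth complex vector bundle form a module over the algebra of
smooth complex-valued functions on the base. -/
instance ContMDiffSection.instModuleSmoothMap :
    Module C^∞⟮IM, M; 𝓘(ℝ, ℂ), ℂ⟯ Cₛ^∞⟮IM; F, V⟯ where
  one_smul s := ContMDiffSection.ext fun x => one_smul ℂ (s x)
  mul_smul f g s := ContMDiffSection.ext fun x => mul_smul (f x) (g x) (s x)
  smul_zero f := ContMDiffSection.ext fun x => smul_zero (f x)
  smul_add f s t := ContMDiffSection.ext fun x => smul_add (f x) (s x) (t x)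
  add_smul f g s := ContMDiffSection.ext fun x => add_smul (f x) (g x) (s x)
  zero_smul s := ContMDiffSection.ext fun x => zero_smul ℂ (s x)

instance ContMDiffSection.instModuleComplex : Module ℂ Cₛ^∞⟮IM; F, V⟯ :=
  Module.compHom _ (algebraMap ℂ C^∞⟮IM, M; 𝓘(ℝ, ℂ), ℂ⟯)

instance ContMDiffSection.instIsScalarTowerComplex :
    IsScalarTower ℂ C^∞⟮IM, M; 𝓘(ℝ, ℂ), ℂ⟯ Cₛ^∞⟮IM; F, V⟯ :=
  ⟨fun c f s => by
    show (c • f) • s = algebraMap ℂ C^∞⟮IM, M; 𝓘(ℝ, ℂ), ℂ⟯ c • f • s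
    rw [Algebra.smul_def, mul_smul]⟩

variable {F₂ : Type*} [NormedAddCommGroup F₂] [NormedSpace ℂ F₂] [FiniteDimensional ℂ F₂]
  {W : M → Type*} [TopologicalSpace (TotalSpace F₂ W)]
  [∀ x, AddCommGroup (W x)] [∀ x, Module ℂ (W x)] [∀ x, TopologicalSpace (W x)]
  [FiberBundle F₂ W] [VectorBundle ℂ F₂ W] [VectorBundle ℝ F₂ W] [ContMDiffVectorBundle ∞ F₂ W IM]
  [∀ x, IsTopologicalAddGroup (W x)] [∀ x, ContinuousSMul ℂ (W x)]
  [VectorBundle ℝ (F →L[ℂ] F₂) ((fun x ↦ V x →SL[RingHom.id ℂ] W x))]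
  [ContMDiffVectorBundle ∞ (F →L[ℂ] F₂) ((fun x ↦ V x →SL[RingHom.id ℂ] W x)) IM]

open Topology

section

variable {𝕜 : Type*} [NontriviallyNormedField 𝕜]
  {EB : Type*} [NormedAddCommGroup EB] [NormedSpace 𝕜 EB] {HB : Type*} [TopologicalSpace HB]
  {IB : ModelWithCorners 𝕜 EB HB} {B : Type*} [TopologicalSpace B] [ChartedSpace HB B]
  {F₁ : Type*} [NormedAddCommGroup F₁] [NormedSpace 𝕜 F₁] {E₁ : B → Type*}
  [TopologicalSpace (TotalSpace F₁ E₁)] [∀ x, AddCommGroup (E₁ x)] [∀ x, Module 𝕜 (E₁ x)]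
  [∀ x, TopologicalSpace (E₁ x)] [FiberBundle F₁ E₁] [VectorBundle 𝕜 F₁ E₁]

theorem ContMDiffSection.sum_apply {n : WithTop ℕ∞} [ContMDiffVectorBundle n F₁ E₁ IB]
    {ι : Type*} (s : Finset ι) (f : ι → Cₛ^n⟮IB; F₁, E₁⟯) (x : B) :
    (∑ i ∈ s, f i) x = ∑ i ∈ s, f i x := by
  rw [← Finset.sum_apply, ← ContMDiffSection.coeAddHom_apply, map_sum]
  simp

namespace Bundle.Trivialization

variable (e : Trivialization F₁ (π F₁ E₁)) [MemTrivializationAtlas e]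

theorem sum_coord_smul_symm {ι : Type*} [Fintype ι] (b : Module.Basis ι 𝕜 F₁) {y : B}
    (hy : y ∈ e.baseSet) (v : E₁ y) :
    ∑ i, b.coord i (e ⟨y, v⟩).2 • e.symm y (b i) = v := by
  simp_rw [← e.symmL_apply (R := 𝕜) hy, ← map_smul, ← map_sum, Module.Basis.coord_apply, b.sum_repr,
    e.symmL_apply (R := 𝕜) hy, e.symm_apply_apply_mk hy]

variable {n : WithTop ℕ∞} [ContMDiffVectorBundle n F₁ E₁ IB] {χ : B → 𝕜}

theorem contMDiff_smul_symm_of_tsupport (hχ : ContMDiff IB 𝓘(𝕜) n χ)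
    (hχe : tsupport χ ⊆ e.baseSet) (w : F₁) :
    ContMDiff IB (IB.prod 𝓘(𝕜, F₁)) n (fun y ↦ TotalSpace.mk' F₁ y (χ y • e.symm y w)) := by
  refine hχ.contMDiffOn.smul_section_of_tsupport e.open_baseSet hχe ?_
  rw [e.contMDiffOn_section_baseSet_iff]
  exact (contMDiffOn_const (c := w)).congr fun y hy ↦ by simp [e.apply_mk_symm hy]

theorem contMDiff_smul_coord_of_tsupport (hχ : ContMDiff IB 𝓘(𝕜) n χ)
    (hχe : tsupport χ ⊆ e.baseSet) {s : ∀ x, E₁ x}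
    (hs : ContMDiff IB (IB.prod 𝓘(𝕜, F₁)) n (fun y ↦ TotalSpace.mk' F₁ y (s y))) :
    ContMDiff IB 𝓘(𝕜, F₁) n (fun y ↦ χ y • (e ⟨y, s y⟩).2) := by
  refine contMDiff_of_tsupport fun x hx ↦ ?_
  have hxe : x ∈ e.baseSet := hχe (tsupport_smul_subset_left _ _ hx)
  exact (hχ x).smul <| (e.contMDiffOn_section_baseSet_iff.1 hs.contMDiffOn).contMDiffAt
    (e.open_baseSet.mem_nhds hxe)

end Bundle.Trivialization

end

section

variable {EB : Type*} [NormedAddCommGroup EB] [NormedSpace ℝ EB] [FiniteDimensional ℝ EB]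
  {HB : Type*} [TopologicalSpace HB] {IB : ModelWithCorners ℝ EB HB}
  {B : Type*} [TopologicalSpace B] [ChartedSpace HB B] [IsManifold IB ∞ B] [T2Space B]

variable (IB) in
theorem exists_contMDiff_tsupport_subset_eventuallyEq_one {x : B} {U : Set B} (hU : U ∈ 𝓝 x) :
    ∃ χ : B → ℝ, ContMDiff IB 𝓘(ℝ) ∞ χ ∧ tsupport χ ⊆ U ∧ χ =ᶠ[𝓝 x] 1 := by
  obtain ⟨f, -, hfU⟩ := (SmoothBumpFunction.nhds_basis_tsupport (I := IB) x).mem_iff.1 hU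
  exact ⟨f, f.contMDiff, hfU, f.eventuallyEq_one⟩

variable {F₁ : Type*} [NormedAddCommGroup F₁] [NormedSpace ℝ F₁] {E₁ : B → Type*}
  [TopologicalSpace (TotalSpace F₁ E₁)] [∀ x, AddCommGroup (E₁ x)] [∀ x, Module ℝ (E₁ x)]
  [∀ x, TopologicalSpace (E₁ x)] [FiberBundle F₁ E₁] [VectorBundle ℝ F₁ E₁]
  [ContMDiffVectorBundle ∞ F₁ E₁ IB]

variable (IB F₁ E₁) in
theorem ContMDiffSection.exists_eventuallyEq_symm (x₀ : B) :
    ∃ σ : F₁ → Cₛ^∞⟮IB; F₁, E₁⟯,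
      ∀ᶠ y in 𝓝 x₀, ∀ w, σ w y = (trivializationAt F₁ E₁ x₀).symm y w := by
  set e := trivializationAt F₁ E₁ x₀
  obtain ⟨χ, hχ, hχe, hχ1⟩ := exists_contMDiff_tsupport_subset_eventuallyEq_one IB
    (e.open_baseSet.mem_nhds (mem_baseSet_trivializationAt F₁ E₁ x₀))
  refine ⟨fun w ↦ ⟨fun y ↦ χ y • e.symm y w, e.contMDiff_smul_symm_of_tsupport hχ hχe w⟩, ?_⟩
  filter_upwards [hχ1] with y hy w
  simp [hy]

variable (IB F₁) in
theorem ContMDiffSection.exists_apply_eq (x : B) (v : E₁ x) :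
    ∃ s : Cₛ^∞⟮IB; F₁, E₁⟯, s x = v := by
  obtain ⟨σ, hσ⟩ := exists_eventuallyEq_symm IB F₁ E₁ x
  refine ⟨σ (trivializationAt F₁ E₁ x ⟨x, v⟩).2, ?_⟩
  rw [hσ.self_of_nhds, Trivialization.symm_apply_apply_mk _ (mem_baseSet_trivializationAt F₁ E₁ x)]

end

section

variable {EB : Type*} [NormedAddCommGroup EB] [NormedSpace ℝ EB]
  {HB : Type*} [TopologicalSpace HB] {IB : ModelWithCorners ℝ EB HB}
  {B : Type*} [TopologicalSpace B] [ChartedSpace HB B]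
  {F₁ : Type*} [NormedAddCommGroup F₁] [NormedSpace ℂ F₁]
  {F₂ : Type*} [NormedAddCommGroup F₂] [NormedSpace ℂ F₂]

theorem contMDiffAt_clm_of_basis {ι : Type*} [Fintype ι] (b : Module.Basis ι ℂ F₁)
    {f : B → F₁ →L[ℂ] F₂} {x : B} {n : WithTop ℕ∞}
    (h : ∀ i, ContMDiffAt IB 𝓘(ℝ, F₂) n (fun y ↦ f y (b i)) x) :
    ContMDiffAt IB 𝓘(ℝ, F₁ →L[ℂ] F₂) n f x := by
  let coord (i : ι) : F₁ →L[ℂ] ℂ :=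
    (ContinuousLinearMap.proj i).comp b.equivFunL.toContinuousLinearMap
  have hf : f = fun y ↦ ∑ i, (coord i).smulRight (f y (b i)) := by
    ext y v
    simp only [coord, _root_.sum_apply, ContinuousLinearMap.smulRight_apply,
      ContinuousLinearMap.comp_apply, ContinuousLinearEquiv.coe_coe, ContinuousLinearMap.proj_apply,
      Module.Basis.equivFunL_apply]
    conv_lhs => rw [← b.sum_repr v]
    simp only [map_sum, map_smul]
  rw [hf]
  exact contMDiffAt_finsetSum fun i _ ↦ ((ContinuousLinearMap.smulRightL ℂ F₁ F₂ (coord i)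
    ).restrictScalars ℝ).contDiff.comp_contMDiffAt (h i)

variable {E₁ : B → Type*}
  [TopologicalSpace (TotalSpace F₁ E₁)] [∀ x, AddCommGroup (E₁ x)] [∀ x, Module ℂ (E₁ x)]
  [∀ x, TopologicalSpace (E₁ x)] [FiberBundle F₁ E₁] [VectorBundle ℂ F₁ E₁]
  {E₂ : B → Type*}
  [TopologicalSpace (TotalSpace F₂ E₂)] [∀ x, AddCommGroup (E₂ x)] [∀ x, Module ℂ (E₂ x)]
  [∀ x, TopologicalSpace (E₂ x)] [FiberBundle F₂ E₂] [VectorBundle ℂ F₂ E₂]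

theorem ContMDiff.complex_clm_bundle_apply [∀ x, IsTopologicalAddGroup (E₂ x)]
    [∀ x, ContinuousSMul ℂ (E₂ x)] {n : WithTop ℕ∞} {Φ : ∀ x, E₁ x →L[ℂ] E₂ x}
    (hΦ : ContMDiff IB (IB.prod 𝓘(ℝ, F₁ →L[ℂ] F₂)) n
      (fun x ↦ TotalSpace.mk' (F₁ →L[ℂ] F₂) (E := fun x ↦ E₁ x →L[ℂ] E₂ x) x (Φ x)))
    {s : ∀ x, E₁ x} (hs : ContMDiff IB (IB.prod 𝓘(ℝ, F₁)) n (fun x ↦ TotalSpace.mk' F₁ x (s x))) :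
    ContMDiff IB (IB.prod 𝓘(ℝ, F₂)) n (fun x ↦ TotalSpace.mk' F₂ x (Φ x (s x))) := by
  intro x₀
  have hΦ₀ := (contMDiffAt_section x₀).1 (hΦ x₀)
  simp_rw [hom_trivializationAt_apply] at hΦ₀
  rw [contMDiffAt_section]
  have hΦℝ := (ContinuousLinearMap.restrictScalarsL ℂ F₁ F₂ ℝ ℝ).contDiff.comp_contMDiffAt hΦ₀
  refine (hΦℝ.clm_apply ((contMDiffAt_section x₀).1 (hs x₀))).congr_of_eventuallyEq ?_
  filter_upwards [(trivializationAt F₁ E₁ x₀).open_baseSet.mem_nhds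
      (mem_baseSet_trivializationAt F₁ E₁ x₀), (trivializationAt F₂ E₂ x₀).open_baseSet.mem_nhds
      (mem_baseSet_trivializationAt F₂ E₂ x₀)] with y h₁ h₂
  simp [ContinuousLinearMap.inCoordinates_eq h₁ h₂, Trivialization.symm_apply_apply_mk _ h₁]

@[simp]
theorem ContMDiffSection.smoothMap_smul_apply (f : C^∞⟮IB, B; 𝓘(ℝ, ℂ), ℂ⟯)
    (s : Cₛ^∞⟮IB; F₁, E₁⟯) (x : B) : (f • s) x = f x • s x :=
  rfl

variable [FiniteDimensional ℝ EB] [IsManifold IB ∞ B] [T2Space B] [FiniteDimensional ℂ F₁]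
  [VectorBundle ℝ F₁ E₁] [ContMDiffVectorBundle ∞ F₁ E₁ IB]

theorem contMDiff_hom_of_forall_contMDiff_apply [∀ x, IsTopologicalAddGroup (E₂ x)]
    [∀ x, ContinuousSMul ℂ (E₂ x)] {Φ : ∀ x, E₁ x →L[ℂ] E₂ x}
    (h : ∀ s : Cₛ^∞⟮IB; F₁, E₁⟯,
      ContMDiff IB (IB.prod 𝓘(ℝ, F₂)) ∞ (fun x ↦ TotalSpace.mk' F₂ x (Φ x (s x)))) :
    ContMDiff IB (IB.prod 𝓘(ℝ, F₁ →L[ℂ] F₂)) ∞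
      (fun x ↦ TotalSpace.mk' (F₁ →L[ℂ] F₂) (E := fun x ↦ E₁ x →L[ℂ] E₂ x) x (Φ x)) := by
  intro x₀
  rw [contMDiffAt_section]
  simp_rw [hom_trivializationAt_apply]
  obtain ⟨σ, hσ⟩ := ContMDiffSection.exists_eventuallyEq_symm IB F₁ E₁ x₀
  let b := Module.finBasis ℂ F₁
  refine contMDiffAt_clm_of_basis b fun i ↦ ?_
  refine ((contMDiffAt_section x₀).1 (h (σ (b i)) x₀)).congr_of_eventuallyEq ?_
  filter_upwards [hσ, (trivializationAt F₁ E₁ x₀).open_baseSet.mem_nhds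
      (mem_baseSet_trivializationAt F₁ E₁ x₀), (trivializationAt F₂ E₂ x₀).open_baseSet.mem_nhds
      (mem_baseSet_trivializationAt F₂ E₂ x₀)] with y hσy h₁ h₂
  simp [ContinuousLinearMap.inCoordinates_eq h₁ h₂, hσy]

variable [VectorBundle ℝ F₂ E₂] [ContMDiffVectorBundle ∞ F₂ E₂ IB]

namespace ContMDiffSection

theorem map_apply_eq_zero
    (T : Cₛ^∞⟮IB; F₁, E₁⟯ →ₗ[C^∞⟮IB, B; 𝓘(ℝ, ℂ), ℂ⟯] Cₛ^∞⟮IB; F₂, E₂⟯)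
    {s : Cₛ^∞⟮IB; F₁, E₁⟯} {x : B} (hs : s x = 0) : T s x = 0 := by
  set e := trivializationAt F₁ E₁ x
  have hxe : x ∈ e.baseSet := mem_baseSet_trivializationAt F₁ E₁ x
  obtain ⟨χ, hχ, hχe, hχ1⟩ := exists_contMDiff_tsupport_subset_eventuallyEq_one IB
    (e.open_baseSet.mem_nhds hxe)
  have hχ0 : ∀ y ∉ e.baseSet, χ y = 0 := fun y hy ↦ image_eq_zero_of_notMem_tsupport (hy <| hχe ·)
  let b := Module.finBasis ℂ F₁
  obtain ⟨χℂ, hχℂ⟩ : ∃ f : C^∞⟮IB, B; 𝓘(ℝ, ℂ), ℂ⟯, ∀ y, f y = χ y :=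
    ⟨⟨_, Complex.ofRealCLM.contDiff.comp_contMDiff hχ⟩, fun _ ↦ rfl⟩
  obtain ⟨t, ht⟩ : ∃ t : _ → Cₛ^∞⟮IB; F₁, E₁⟯, ∀ i y, t i y = (χ y : ℂ) • e.symm y (b i) :=
    ⟨fun i ↦ ⟨_, e.contMDiff_smul_symm_of_tsupport hχ hχe (b i)⟩,
      fun _ _ ↦ (Complex.coe_smul ..).symm⟩
  obtain ⟨c, hc⟩ : ∃ c : _ → C^∞⟮IB, B; 𝓘(ℝ, ℂ), ℂ⟯,
      ∀ i y, c i y = χ y * b.coord i (e ⟨y, s y⟩).2 :=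
    ⟨fun i ↦ ⟨_, ((b.coord i).toContinuousLinearMap.restrictScalars ℝ).contDiff.comp_contMDiff
      (e.contMDiff_smul_coord_of_tsupport hχ hχe s.contMDiff)⟩, fun i y ↦ by simp⟩
  have hexpand : (χℂ * χℂ) • s = ∑ i, c i • t i := by
    ext y
    simp only [smoothMap_smul_apply, sum_apply, ContMDiffMap.coe_mul, Pi.mul_apply, hχℂ, hc, ht]
    by_cases hy : y ∈ e.baseSet
    · conv_lhs => rw [← e.sum_coord_smul_symm b hy (s y)]
      rw [Finset.smul_sum]
      refine Finset.sum_congr rfl fun i _ ↦ ?_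
      module
    · simp [hχ0 y hy]
  have hcx (i) : c i x = 0 := by simp [hc, hs, (e.linear ℂ hxe).map_zero]
  calc T s x = ((χℂ * χℂ) • T s) x := by simp [hχℂ, hχ1.self_of_nhds]
    _ = ∑ i, c i x • T (t i) x := by
      rw [← map_smul, hexpand, map_sum]
      simp [sum_apply]
    _ = 0 := by simp [hcx]

theorem map_apply_congr
    (T : Cₛ^∞⟮IB; F₁, E₁⟯ →ₗ[C^∞⟮IB, B; 𝓘(ℝ, ℂ), ℂ⟯] Cₛ^∞⟮IB; F₂, E₂⟯)
    {s s' : Cₛ^∞⟮IB; F₁, E₁⟯} {x : B} (h : s x = s' x) : T s x = T s' x := by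
  simpa [sub_eq_zero] using map_apply_eq_zero T (s := s - s') (by simp [h])

variable [∀ x, IsTopologicalAddGroup (E₂ x)] [∀ x, ContinuousSMul ℂ (E₂ x)]

theorem exists_clm_map_apply_eq
    (T : Cₛ^∞⟮IB; F₁, E₁⟯ →ₗ[C^∞⟮IB, B; 𝓘(ℝ, ℂ), ℂ⟯] Cₛ^∞⟮IB; F₂, E₂⟯) (x : B) :
    ∃ φ : E₁ x →L[ℂ] E₂ x, ∀ s, T s x = φ (s x) := by
  set e := trivializationAt F₁ E₁ x
  have hxe : x ∈ e.baseSet := mem_baseSet_trivializationAt F₁ E₁ x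
  obtain ⟨σ, hσ⟩ := exists_eventuallyEq_symm IB F₁ E₁ x
  have hσx (w : F₁) : σ w x = e.symmL ℂ x w := by rw [hσ.self_of_nhds, e.symmL_apply (R := ℂ) hxe]
  let ψ : F₁ →ₗ[ℂ] E₂ x :=
    { toFun w := T (σ w) x
      map_add' w w' := by
        rw [map_apply_congr T (s' := σ w + σ w') (by simp [hσx]), map_add]
        rfl
      map_smul' c w := by
        have : (algebraMap ℂ C^∞⟮IB, B; 𝓘(ℝ, ℂ), ℂ⟯ c • σ w) x = σ (c • w) x := by
          rw [smoothMap_smul_apply, hσx, hσx, map_smul]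
          rfl
        rw [← map_apply_congr T this, map_smul]
        rfl }
  refine ⟨LinearMap.toContinuousLinearMap ψ ∘L e.continuousLinearMapAt ℂ x, fun s ↦ ?_⟩
  exact map_apply_congr T (s' := σ (e.continuousLinearMapAt ℂ x (s x)))
    (by rw [hσx, e.symmL_continuousLinearMapAt hxe])

def applyLinearMap (Φ : Cₛ^∞⟮IB; F₁ →L[ℂ] F₂, fun x ↦ E₁ x →L[ℂ] E₂ x⟯) :
    Cₛ^∞⟮IB; F₁, E₁⟯ →ₗ[C^∞⟮IB, B; 𝓘(ℝ, ℂ), ℂ⟯] Cₛ^∞⟮IB; F₂, E₂⟯ where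
  toFun s := ⟨fun x ↦ Φ x (s x), Φ.contMDiff.complex_clm_bundle_apply s.contMDiff⟩
  map_add' s s' := ext fun x ↦ map_add (Φ x) (s x) (s' x)
  map_smul' f s := ext fun x ↦ map_smul (Φ x) (f x) (s x)

end ContMDiffSection

end

/-- Smooth global sections of the homomorphism bundle `Hom(E,F)` correspond bijectively,
via pointwise application, to module homomorphisms `Γ^∞(E) → Γ^∞(F)` over the smooth functions. -/
theorem sections_hom_bundle_equiv_linearMap :
    (∀ Φ : Cₛ^∞⟮IM; F →L[ℂ] F₂, (fun x ↦ V x →SL[RingHom.id ℂ] W x)⟯,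
      ∃ T : Cₛ^∞⟮IM; F, V⟯ →ₗ[C^∞⟮IM, M; 𝓘(ℝ, ℂ), ℂ⟯] Cₛ^∞⟮IM; F₂, W⟯,
        ∀ (s : Cₛ^∞⟮IM; F, V⟯) (x : M), T s x = Φ x (s x)) ∧
    (∀ T : Cₛ^∞⟮IM; F, V⟯ →ₗ[C^∞⟮IM, M; 𝓘(ℝ, ℂ), ℂ⟯] Cₛ^∞⟮IM; F₂, W⟯,
      ∃! Φ : Cₛ^∞⟮IM; F →L[ℂ] F₂, (fun x ↦ V x →SL[RingHom.id ℂ] W x)⟯,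
        ∀ (s : Cₛ^∞⟮IM; F, V⟯) (x : M), T s x = Φ x (s x)) := by
  refine ⟨fun Φ ↦ ⟨Φ.applyLinearMap, fun _ _ ↦ rfl⟩, fun T ↦ ?_⟩
  choose Φ hΦ using ContMDiffSection.exists_clm_map_apply_eq T
  refine ⟨⟨fun x ↦ Φ x, contMDiff_hom_of_forall_contMDiff_apply fun s ↦ ?_⟩, fun s x ↦ hΦ x s,
    fun Φ' hΦ' ↦ ?_⟩
  · simpa only [hΦ] using (T s).contMDiff
  · ext x v
    obtain ⟨s, rfl⟩ := ContMDiffSection.exists_apply_eq IM F x v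
    rw [← hΦ', hΦ]
    rfl
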